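/- Let q be a connected Boolean CQ in GHW(1) over a schema of maximum arity two that is a core. Then q has at most one endomorphism besides the identity mapping; and if such an endomorphism exists, it is the swapping endomorphism for some pair of variables u and v that are adjacent in the Gaifman graph G(q). -/

import Mathlib

/-!
Common formalization of relational databases, conjunctive queries (CQs),
generalized hypertreewidth, existential cover (pebble) games, and
approximations of CQs, following Barceló, Romero, Zeume,
"A More General Theory of Static Approximations for Conjunctive Queries".
-/

/-- A relational schema: a finite set of relation symbols, each with an arity. -/
structure Schema where
  Rel : Type
  rel_finite : Finite Rel
  arity : Rel → ℕ

/-- A fact (atom) over schema `σ`, with arguments (constants/variables) from `α`. -/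
structure Atom (σ : Schema) (α : Type) where
  rel : σ.Rel
  args : Fin (σ.arity rel) → α

/-- A database instance over `σ` with elements from `α`: a set of facts.
    (Finiteness or countability is imposed separately where needed.) -/
abbrev DB (σ : Schema) (α : Type) := Set (Atom σ α)

/-- Applying a map on elements to a fact. -/
def Atom.map {σ : Schema} {α β : Type} (h : α → β) (f : Atom σ α) : Atom σ β :=
  ⟨f.rel, fun i => h (f.args i)⟩

/-- `h` is a homomorphism from `D` to `D'`. -/
def IsHom {σ : Schema} {α β : Type} (h : α → β) (D : DB σ α) (D' : DB σ β) : Prop :=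
  ∀ f ∈ D, f.map h ∈ D'

/-- `(D, a) → (D', b)`: there is a homomorphism from `D` to `D'` mapping `a` to `b`. -/
def HomTup {σ : Schema} {α β : Type} {n : ℕ} (D : DB σ α) (a : Fin n → α)
    (D' : DB σ β) (b : Fin n → β) : Prop :=
  ∃ h : α → β, IsHom h D D' ∧ ∀ i, h (a i) = b i

/-- The active domain of a database: the elements appearing in its facts. -/
def adom {σ : Schema} {α : Type} (D : DB σ α) : Set α :=
  ⋃ f ∈ D, Set.range f.args

/-- A tree decomposition of a set of atoms `A` with respect to the set `E` of
    existentially quantified variables: a (possibly infinite) tree `T` together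
    with bags `bag t ⊆ E` such that the existential variables of every atom are
    contained in some bag, and for every existential variable the set of nodes
    whose bag contains it induces a connected subtree. -/
structure TreeDecomp {σ : Schema} {V : Type} (A : DB σ V) (E : Set V) where
  node : Type
  T : SimpleGraph node
  isTree : T.IsTree
  bag : node → Set V
  bag_sub : ∀ t, bag t ⊆ E
  covers : ∀ f ∈ A, ∃ t, Set.range f.args ∩ E ⊆ bag t
  conn : ∀ y ∈ E, (SimpleGraph.induce {t | y ∈ bag t} T).Connected

/-- The decomposition has width at most `k`: every bag is covered by at most
    `k` atoms of `A`. -/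
def TreeDecomp.widthLE {σ : Schema} {V : Type} {A : DB σ V} {E : Set V}
    (td : TreeDecomp A E) (k : ℕ) : Prop :=
  ∀ t, ∃ S : Finset (Atom σ V), ↑S ⊆ A ∧ S.card ≤ k ∧
    td.bag t ⊆ ⋃ f ∈ (S : Set (Atom σ V)), Set.range f.args

/-- The atoms `A` (with existential variables `E`) have generalized
    hypertreewidth at most `k`. -/
def ghwAuxLE {σ : Schema} {V : Type} (A : DB σ V) (E : Set V) (k : ℕ) : Prop :=
  ∃ td : TreeDecomp A E, td.widthLE k

/-- A conjunctive query over `σ` with `n` free variables: a finite set of atoms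
    over a type of variables, together with the tuple of free variables.
    Its canonical database is `atoms`. -/
structure CQ (σ : Schema) (n : ℕ) where
  Var : Type
  atoms : DB σ Var
  free : Fin n → Var
  finAtoms : atoms.Finite

namespace CQ

variable {σ : Schema} {n : ℕ}

/-- The existentially quantified variables of a CQ: variables occurring in its
    atoms that are not free. -/
def existVars (q : CQ σ n) : Set q.Var := adom q.atoms \ Set.range q.free

/-- `q` has generalized hypertreewidth at most `k`, i.e. `q ∈ GHW(k)`. -/
def ghwLE (q : CQ σ n) (k : ℕ) : Prop := ghwAuxLE q.atoms q.existVars k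

/-- The result of evaluating `q` over a database `D` (with constants from `ℕ`):
    all tuples of elements of `D` to which the canonical database of `q` maps
    homomorphically (sending the free variables to the tuple). -/
def eval (q : CQ σ n) (D : DB σ ℕ) : Set (Fin n → ℕ) :=
  {a | (∀ i, a i ∈ adom D) ∧ HomTup q.atoms q.free D a}

/-- Containment of CQs: `q ⊆ q'`, i.e. `q(D) ⊆ q'(D)` for every (finite) database. -/
def le (q q' : CQ σ n) : Prop :=
  ∀ D : DB σ ℕ, D.Finite → q.eval D ⊆ q'.eval D

/-- Equivalence of CQs: mutual containment. -/
def equiv (q q' : CQ σ n) : Prop := q.le q' ∧ q'.le q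

end CQ

/-- `q'` is a `GHW(k)`-overapproximation of `q`: `q' ∈ GHW(k)`, `q ⊆ q'`, and
    there is no `q'' ∈ GHW(k)` with `q ⊆ q'' ⊆ q'` and `q'' ≢ q'`. -/
def IsOverapprox {σ : Schema} {n : ℕ} (k : ℕ) (q q' : CQ σ n) : Prop :=
  q'.ghwLE k ∧ q.le q' ∧
    ¬ ∃ q'' : CQ σ n, q''.ghwLE k ∧ q.le q'' ∧ q''.le q' ∧ ¬ q''.equiv q'

/-- `q'` is a `GHW(k)`-underapproximation of `q`: `q' ∈ GHW(k)`, `q' ⊆ q`, and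
    there is no `q'' ∈ GHW(k)` with `q' ⊆ q'' ⊆ q` and `q'' ≢ q'`. -/
def IsUnderapprox {σ : Schema} {n : ℕ} (k : ℕ) (q q' : CQ σ n) : Prop :=
  q'.ghwLE k ∧ q'.le q ∧
    ¬ ∃ q'' : CQ σ n, q''.ghwLE k ∧ q'.le q'' ∧ q''.le q ∧ ¬ q''.equiv q'

/-- `q' ⊑_q q''`: the symmetric difference of `q''` and `q` is contained in the
    symmetric difference of `q'` and `q`, over every (finite) database. -/
def deltaLE {σ : Schema} {n : ℕ} (q q' q'' : CQ σ n) : Prop :=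
  ∀ D : DB σ ℕ, D.Finite →
    symmDiff (q.eval D) (q''.eval D) ⊆ symmDiff (q.eval D) (q'.eval D)

/-- `q'` is a `GHW(k)`-Δ-approximation of `q`: `q' ∈ GHW(k)` and `q'` is maximal
    with respect to the partial order `⊑_q` on `GHW(k)`. -/
def IsDeltaApprox {σ : Schema} {n : ℕ} (k : ℕ) (q q' : CQ σ n) : Prop :=
  q'.ghwLE k ∧
    ¬ ∃ q'' : CQ σ n, q''.ghwLE k ∧ deltaLE q q' q'' ∧ ¬ deltaLE q q'' q'

/-- `U` is covered by at most `k` atoms of `D`. -/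
def kCovered {σ : Schema} {α : Type} (k : ℕ) (D : DB σ α) (U : Set α) : Prop :=
  ∃ S : Finset (Atom σ α), ↑S ⊆ D ∧ S.card ≤ k ∧
    U ⊆ ⋃ f ∈ (S : Set (Atom σ α)), Set.range f.args

/-- `U` is a `k`-union of `D`: the union of the element sets of at most `k`
    atoms of `D`. -/
def kUnion {σ : Schema} {α : Type} (k : ℕ) (D : DB σ α) (U : Set α) : Prop :=
  ∃ S : Finset (Atom σ α), ↑S ⊆ D ∧ S.card ≤ k ∧
    U = ⋃ f ∈ (S : Set (Atom σ α)), Set.range f.args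

/-- The map `h` on the pebbled set `U`, extended by `a ↦ b` on the distinguished
    tuples, is a partial homomorphism from `D` to `D'`: `h` sends `a` to `b` and
    every fact of `D` whose elements lie in `U ∪ range a` to a fact of `D'`. -/
def PartialOk {σ : Schema} {α β : Type} {n : ℕ} (D : DB σ α) (D' : DB σ β)
    (a : Fin n → α) (b : Fin n → β) (U : Set α) (h : α → β) : Prop :=
  (∀ i, h (a i) = b i) ∧
  ∀ f ∈ D, Set.range f.args ⊆ U ∪ Set.range a → f.map h ∈ D'

/-- `(D, a) →_k (D', b)`: Duplicator has a winning strategy in the existential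
    `k`-cover game on `(D, a)` and `(D', b)`, presented as a nonempty family of
    positions (pebbled set + partial homomorphism) that is closed under
    Spoiler placing a pebble (provided the pebbled elements stay covered by at
    most `k` atoms of `D`) and under removing pebbles. -/
def PebbleWin {σ : Schema} {α β : Type} {n : ℕ} (k : ℕ) (D : DB σ α) (a : Fin n → α)
    (D' : DB σ β) (b : Fin n → β) : Prop :=
  ∃ F : Set (Set α × (α → β)),
    (∃ h, (∅, h) ∈ F) ∧
    (∀ p ∈ F, kCovered k D p.1 ∧ PartialOk D D' a b p.1 p.2) ∧
    (∀ p ∈ F, ∀ c : α, kCovered k D (insert c p.1) →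
      ∃ p' ∈ F, p'.1 = insert c p.1 ∧ ∀ x ∈ p.1, p'.2 x = p.2 x) ∧
    (∀ p ∈ F, ∀ U, U ⊆ p.1 → ∃ p' ∈ F, p'.1 = U ∧ ∀ x ∈ U, p'.2 x = p.2 x)

/-- Duplicator can survive `c` more rounds of the compact existential `k`-cover
    game from the position with pebbled set `U` and partial map `h`: whatever
    `k`-union `U'` Spoiler plays next, Duplicator has a consistent partial
    homomorphism on `U'` from which she can survive `c - 1` more rounds. -/
def WinRounds {σ : Schema} {α β : Type} {n : ℕ} (k : ℕ) (D : DB σ α) (a : Fin n → α)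
    (D' : DB σ β) (b : Fin n → β) : ℕ → Set α → (α → β) → Prop
  | 0, _, _ => True
  | c + 1, U, h => ∀ U', kUnion k D U' →
      ∃ h', (∀ x ∈ U ∩ U', h' x = h x) ∧ PartialOk D D' a b U' h' ∧
        WinRounds k D a D' b c U' h'

/-- `(D, a) →_k^c (D', b)`: Duplicator has a winning strategy in the first `c`
    rounds of the compact existential `k`-cover game on `(D, a)` and `(D', b)`. -/
def PebbleWinC {σ : Schema} {α β : Type} {n : ℕ} (k c : ℕ) (D : DB σ α) (a : Fin n → α)
    (D' : DB σ β) (b : Fin n → β) : Prop :=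
  ∃ h0, PartialOk D D' a b ∅ h0 ∧ WinRounds k D a D' b c ∅ h0

/-- The Gaifman graph of a set of atoms `A`: vertices are elements, with an edge
    between two distinct elements that occur together in some atom of `A`. -/
def gaifmanOf {σ : Schema} {V : Type} (A : DB σ V) : SimpleGraph V where
  Adj z z' := z ≠ z' ∧ ∃ f ∈ A, z ∈ Set.range f.args ∧ z' ∈ Set.range f.args
  symm := by
    constructor
    rintro z z' ⟨hne, f, hf, hz, hz'⟩
    exact ⟨hne.symm, f, hf, hz', hz⟩
  loopless := by
    constructor
    rintro z ⟨hne, -⟩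
    exact hne rfl

/-- A Boolean CQ is connected if its Gaifman graph (on the variables occurring
    in it) is connected. -/
def CQ.IsConnected {σ : Schema} (q : CQ σ 0) : Prop :=
  (SimpleGraph.induce (adom q.atoms) (gaifmanOf q.atoms)).Connected

/-- `q` is a core: no CQ with fewer atoms is (homomorphically) equivalent to it. -/
def IsCore {σ : Schema} {n : ℕ} (q : CQ σ n) : Prop :=
  ∀ q' : CQ σ n, HomTup q.atoms q.free q'.atoms q'.free →
    HomTup q'.atoms q'.free q.atoms q.free →
    q.atoms.ncard ≤ q'.atoms.ncard


section CQBasics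

variable {σ : Schema}

lemma Atom.map_map' {α β γ : Type} (g : β → γ) (h : α → β) (f : Atom σ α) :
    (f.map h).map g = f.map (g ∘ h) := rfl

lemma Atom.map_eq_self {α : Type} {f : Atom σ α} {h : α → α}
    (hh : ∀ i, h (f.args i) = f.args i) : f.map h = f := by
  cases f with
  | mk r a => exact congrArg (Atom.mk r) (funext hh)

lemma mem_adom_iff {α : Type} {D : DB σ α} {x : α} :
    x ∈ adom D ↔ ∃ f ∈ D, x ∈ Set.range f.args := by
  simp [adom]

lemma adom_finite {α : Type} {D : DB σ α} (hD : D.Finite) : (adom D).Finite :=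
  Set.Finite.biUnion hD (fun f _ => Set.finite_range _)

lemma isHom_comp {α : Type} {D D' D'' : DB σ α} {g h : α → α}
    (hg : IsHom g D D') (hh : IsHom h D' D'') : IsHom (h ∘ g) D D'' := by
  intro f hf
  have : (f.map g).map h ∈ D'' := hh _ (hg f hf)
  rwa [Atom.map_map'] at this

lemma fin_pigeonhole {m : ℕ} (hm : m ≤ 2) {α : Type} {args : Fin m → α} {x a b : α}
    (hx : x ∈ Set.range args) (ha : a ∈ Set.range args) (hb : b ∈ Set.range args)
    (hab : a ≠ b) : x = a ∨ x = b := by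
  obtain ⟨i, hi⟩ := hx
  obtain ⟨ia, hia⟩ := ha
  obtain ⟨ib, hib⟩ := hb
  have htri : i = ia ∨ i = ib ∨ ia = ib := by
    by_contra hc
    push_neg at hc
    have h1 : i.val ≠ ia.val := fun h => hc.1 (Fin.ext h)
    have h2 : i.val ≠ ib.val := fun h => hc.2.1 (Fin.ext h)
    have h3 : ia.val ≠ ib.val := fun h => hc.2.2 (Fin.ext h)
    have := i.isLt; have := ia.isLt; have := ib.isLt
    omega
  rcases htri with rfl | rfl | rfl
  · exact Or.inl (hia ▸ hi ▸ rfl)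
  · exact Or.inr (hib ▸ hi ▸ rfl)
  · exact absurd (hia.symm.trans hib) hab

end CQBasics

section CoreFacts

variable {σ : Schema} {q : CQ σ 0}

lemma core_image_atoms (hcore : IsCore q) {h : q.Var → q.Var}
    (hh : IsHom h q.atoms q.atoms) : (Atom.map h) '' q.atoms = q.atoms := by
  have hsub : (Atom.map h) '' q.atoms ⊆ q.atoms := by
    rintro _ ⟨f, hf, rfl⟩; exact hh f hf
  set q' : CQ σ 0 := ⟨q.Var, (Atom.map h) '' q.atoms, q.free, q.finAtoms.image _⟩ with hq'
  have hfwd : HomTup q.atoms q.free q'.atoms q'.free :=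
    ⟨h, fun f hf => Set.mem_image_of_mem _ hf, fun i => i.elim0⟩
  have hbwd : HomTup q'.atoms q'.free q.atoms q.free := by
    refine ⟨id, fun f hf => ?_, fun i => i.elim0⟩
    have : f.map id = f := Atom.map_eq_self (fun _ => rfl)
    rw [this]
    exact hsub hf
  have hle := hcore q' hfwd hbwd
  exact Set.eq_of_subset_of_ncard_le hsub hle q.finAtoms

lemma endo_mapsTo {h : q.Var → q.Var} (hh : IsHom h q.atoms q.atoms) :
    Set.MapsTo h (adom q.atoms) (adom q.atoms) := by
  intro x hx
  obtain ⟨f, hf, i, hi⟩ := mem_adom_iff.mp hx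
  exact mem_adom_iff.mpr ⟨f.map h, hh f hf, i, by simp [Atom.map, hi]⟩

lemma endo_surjOn (hcore : IsCore q) {h : q.Var → q.Var}
    (hh : IsHom h q.atoms q.atoms) : Set.SurjOn h (adom q.atoms) (adom q.atoms) := by
  intro y hy
  obtain ⟨g, hg, i, hi⟩ := mem_adom_iff.mp hy
  rw [← core_image_atoms hcore hh] at hg
  obtain ⟨f, hf, rfl⟩ := hg
  exact ⟨f.args i, mem_adom_iff.mpr ⟨f, hf, i, rfl⟩, hi⟩

lemma endo_injOn (hcore : IsCore q) {h : q.Var → q.Var}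
    (hh : IsHom h q.atoms q.atoms) : Set.InjOn h (adom q.atoms) :=
  (((adom_finite q.finAtoms).surjOn_iff_bijOn_of_mapsTo (endo_mapsTo hh)).mp
    (endo_surjOn hcore hh)).injOn

lemma adj_mem_adom {a b : q.Var} (hadj : (gaifmanOf q.atoms).Adj a b) :
    a ∈ adom q.atoms ∧ b ∈ adom q.atoms := by
  obtain ⟨-, f, hf, ha, hb⟩ := hadj
  exact ⟨mem_adom_iff.mpr ⟨f, hf, ha⟩, mem_adom_iff.mpr ⟨f, hf, hb⟩⟩

lemma endo_adj (hcore : IsCore q) {h : q.Var → q.Var}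
    (hh : IsHom h q.atoms q.atoms) {a b : q.Var} (hadj : (gaifmanOf q.atoms).Adj a b) :
    (gaifmanOf q.atoms).Adj (h a) (h b) := by
  obtain ⟨hne, f, hf, ⟨i, hi⟩, ⟨j, hj⟩⟩ := hadj
  refine ⟨?_, f.map h, hh f hf, ⟨i, by simp [Atom.map, hi]⟩, ⟨j, by simp [Atom.map, hj]⟩⟩
  intro hc
  exact hne (endo_injOn hcore hh (mem_adom_iff.mpr ⟨f, hf, i, hi⟩)
    (mem_adom_iff.mpr ⟨f, hf, j, hj⟩) hc)

lemma isHom_iterate {h : q.Var → q.Var} (hh : IsHom h q.atoms q.atoms) (n : ℕ) :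
    IsHom h^[n] q.atoms q.atoms := by
  induction n with
  | zero =>
    intro f hf
    simpa [Function.iterate_zero, Atom.map_eq_self (h := id) (f := f) (fun _ => rfl)] using hf
  | succ n ih =>
    rw [Function.iterate_succ']
    exact isHom_comp ih hh

end CoreFacts
namespace AuxGraph

variable {ν : Type} (H : SimpleGraph ν)

/-- One step avoiding `excl`. -/
def stepAvoid (excl : ν) (a b : ν) : Prop := H.Adj a b ∧ a ≠ excl ∧ b ≠ excl

/-- Vertices reachable from `s` by walks avoiding `excl`. -/
def reachAvoid (excl s : ν) : Set ν :=
  {z | Relation.ReflTransGen (stepAvoid H excl) s z}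

variable {H}

lemma mem_reachAvoid_self (excl s : ν) : s ∈ reachAvoid H excl s :=
  Relation.ReflTransGen.refl

lemma reachAvoid_ne {excl s z : ν} (hs : s ≠ excl) (hz : z ∈ reachAvoid H excl s) :
    z ≠ excl := by
  induction hz with
  | refl => exact hs
  | tail _ h ih => exact h.2.2

lemma reachAvoid_step {excl s a b : ν} (ha : a ∈ reachAvoid H excl s)
    (hadj : H.Adj a b) (hs : s ≠ excl) (hb : b ≠ excl) : b ∈ reachAvoid H excl s :=
  Relation.ReflTransGen.tail ha ⟨hadj, reachAvoid_ne hs ha, hb⟩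

lemma reachAvoid_trans {excl s z y : ν} (hz : z ∈ reachAvoid H excl s)
    (hy : y ∈ reachAvoid H excl z) : y ∈ reachAvoid H excl s :=
  Relation.ReflTransGen.trans hz hy

lemma reachAvoid_symm {excl s z : ν} (hs : s ≠ excl) (hz : z ∈ reachAvoid H excl s) :
    s ∈ reachAvoid H excl z := by
  induction hz with
  | refl => exact Relation.ReflTransGen.refl
  | tail _ hstep ih =>
    exact Relation.ReflTransGen.trans
      (Relation.ReflTransGen.single ⟨hstep.1.symm, hstep.2.2, hstep.2.1⟩) ih

lemma reachAvoid_walk {excl s z : ν} (hs : s ≠ excl) (hz : z ∈ reachAvoid H excl s) :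
    ∃ w : H.Walk s z, excl ∉ w.support := by
  induction hz with
  | refl => exact ⟨SimpleGraph.Walk.nil, by simp [Ne.symm hs]⟩
  | tail _ h ih =>
    obtain ⟨w, hw⟩ := ih
    refine ⟨w.concat h.1, ?_⟩
    rw [SimpleGraph.Walk.support_concat]
    intro hmem
    rcases List.mem_append.mp hmem with h1 | h2
    · exact hw h1
    · exact h.2.2 (by simpa using (List.mem_singleton.mp h2).symm)

lemma walk_reachAvoid {excl s z x : ν} (hx : x ∈ reachAvoid H excl s) (hs : s ≠ excl)
    (w : H.Walk x z) (hw : excl ∉ w.support) : z ∈ reachAvoid H excl s := by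
  induction w with
  | nil => exact hx
  | cons hadj p ih =>
    rename_i u v t
    rw [SimpleGraph.Walk.support_cons] at hw
    have hvs : excl ∉ p.support := fun h => hw (List.mem_cons_of_mem _ h)
    have hv : v ≠ excl := fun h => hvs (h ▸ p.start_mem_support)
    exact ih (reachAvoid_step hx hadj hs hv) hvs

/-- In an acyclic graph, the two sides of an edge are disjoint. -/
lemma reachAvoid_disjoint (hac : H.IsAcyclic) {u₁ u₂ z : ν} (hadj : H.Adj u₁ u₂)
    (h1 : z ∈ reachAvoid H u₂ u₁) (h2 : z ∈ reachAvoid H u₁ u₂) : False := by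
  classical
  have hne : u₁ ≠ u₂ := hadj.ne
  obtain ⟨w1, hw1⟩ := reachAvoid_walk hne h1
  obtain ⟨w2, hw2⟩ := reachAvoid_walk (Ne.symm hne) h2
  set W : H.Walk u₁ u₂ := w1.append w2.reverse with hW
  have hedge : s(u₁, u₂) ∉ W.edges := by
    intro hmem
    rw [SimpleGraph.Walk.edges_append] at hmem
    rcases List.mem_append.mp hmem with hm | hm
    · exact hw1 (w1.snd_mem_support_of_mem_edges hm)
    · rw [SimpleGraph.Walk.edges_reverse] at hm
      exact hw2 (w2.fst_mem_support_of_mem_edges (List.mem_reverse.mp hm))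
  have hPQ := SimpleGraph.isAcyclic_iff_path_unique.mp hac
    ⟨W.bypass, W.bypass_isPath⟩ ⟨SimpleGraph.Walk.cons hadj SimpleGraph.Walk.nil,
      by simp [SimpleGraph.Walk.isPath_def, SimpleGraph.Walk.support_cons, hne]⟩
  have : s(u₁, u₂) ∈ W.bypass.edges := by
    rw [show W.bypass = SimpleGraph.Walk.cons hadj SimpleGraph.Walk.nil from
      congrArg Subtype.val hPQ]
    simp
  exact hedge (W.edges_bypass_subset this)

/-- Every vertex reachable from `u₁` is on one of the two sides. -/
lemma reachAvoid_cover {u₁ u₂ x z : ν} (hne : u₁ ≠ u₂)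
    (hx : x ∈ reachAvoid H u₂ u₁ ∪ reachAvoid H u₁ u₂) (w : H.Walk x z) :
    z ∈ reachAvoid H u₂ u₁ ∪ reachAvoid H u₁ u₂ := by
  induction w with
  | nil => exact hx
  | cons hadj p ih =>
    rename_i a b t
    apply ih
    by_cases hb2 : b = u₂
    · exact Or.inr (hb2 ▸ mem_reachAvoid_self _ _)
    by_cases hb1 : b = u₁
    · exact Or.inl (hb1 ▸ mem_reachAvoid_self _ _)
    rcases hx with hA | hB
    · exact Or.inl (reachAvoid_step hA hadj hne hb2)
    · exact Or.inr (reachAvoid_step hB hadj (Ne.symm hne) hb1)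

/-- Separation: a walk from side A to side B passes through both `u₁` and `u₂`. -/
lemma reachAvoid_sep (hac : H.IsAcyclic) {u₁ u₂ x y : ν} (hadj : H.Adj u₁ u₂)
    (hx : x ∈ reachAvoid H u₂ u₁) (hy : y ∈ reachAvoid H u₁ u₂) (w : H.Walk x y) :
    u₁ ∈ w.support ∧ u₂ ∈ w.support := by
  constructor
  · by_contra h1
    have : x ∈ reachAvoid H u₁ u₂ := by
      refine walk_reachAvoid hy hadj.ne' w.reverse ?_
      rw [SimpleGraph.Walk.support_reverse]; simpa using h1
    exact reachAvoid_disjoint hac hadj hx this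
  · by_contra h2
    exact reachAvoid_disjoint hac hadj (walk_reachAvoid hx hadj.ne w h2) hy

end AuxGraph

open AuxGraph

section Acyclicity

variable {σ : Schema} {q : CQ σ 0}

lemma existVars_eq_adom (q : CQ σ 0) : q.existVars = adom q.atoms := by
  unfold CQ.existVars
  rw [Set.range_eq_empty q.free, Set.diff_empty]

lemma gaifman_acyclic (harity : ∀ R : σ.Rel, σ.arity R ≤ 2) (hghw : q.ghwLE 1) :
    (gaifmanOf q.atoms).IsAcyclic := by
  classical
  obtain ⟨td, hwidth⟩ := hghw
  set G := gaifmanOf q.atoms with hG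
  set T := td.T with hT
  have hTacy : T.IsAcyclic := td.isTree.2
  have hEX : q.existVars = adom q.atoms := existVars_eq_adom q
  -- bags have at most two elements
  have hbag2 : ∀ (t : td.node) (x a b : q.Var), x ∈ td.bag t → a ∈ td.bag t →
      b ∈ td.bag t → a ≠ b → x = a ∨ x = b := by
    intro t x a b hx ha hb hab
    obtain ⟨S, hSsub, hScard, hScov⟩ := hwidth t
    have getf : ∀ y ∈ td.bag t, ∃ f ∈ S, y ∈ Set.range f.args := by
      intro y hy
      have := hScov hy
      simpa using this
    obtain ⟨f, hfS, hxf⟩ := getf x hx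
    obtain ⟨g, hgS, hag⟩ := getf a ha
    obtain ⟨g', hg'S, hbg'⟩ := getf b hb
    have hfg : g = f := Finset.card_le_one.mp hScard g hgS f hfS
    have hfg' : g' = f := Finset.card_le_one.mp hScard g' hg'S f hfS
    rw [hfg] at hag
    rw [hfg'] at hbg'
    exact fin_pigeonhole (harity f.rel) hxf hag hbg' hab
  -- every edge has a node whose bag contains both endpoints
  have hedge_bag : ∀ {a b : q.Var}, G.Adj a b → ∃ t, a ∈ td.bag t ∧ b ∈ td.bag t := by
    intro a b hadj
    obtain ⟨hne, f, hf, ha, hb⟩ := hadj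
    obtain ⟨t, ht⟩ := td.covers f hf
    refine ⟨t, ht ⟨ha, ?_⟩, ht ⟨hb, ?_⟩⟩
    · rw [hEX]; exact mem_adom_iff.mpr ⟨f, hf, ha⟩
    · rw [hEX]; exact mem_adom_iff.mpr ⟨f, hf, hb⟩
  -- connected subtrees: walk between any two nodes whose bags contain y
  have hsubtree : ∀ (y : q.Var), y ∈ adom q.atoms → ∀ (n₁ n₂ : td.node),
      y ∈ td.bag n₁ → y ∈ td.bag n₂ →
      ∃ w : T.Walk n₁ n₂, ∀ n ∈ w.support, y ∈ td.bag n := by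
    intro y hy n₁ n₂ h1 h2
    have hconn := td.conn y (hEX ▸ hy)
    obtain ⟨p⟩ := hconn.preconnected ⟨n₁, h1⟩ ⟨n₂, h2⟩
    refine ⟨p.map (SimpleGraph.Embedding.induce _).toHom, ?_⟩
    intro n hn
    have hn : n ∈ (p.map (SimpleGraph.Embedding.induce {t | y ∈ td.bag t}).toHom).support := hn
    rw [SimpleGraph.Walk.support_map] at hn
    obtain ⟨⟨m, hm⟩, _, rfl⟩ := List.mem_map.mp hn
    exact hm
  -- main: no cycles
  intro v c hcyc
  have hlen := hcyc.three_le_length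
  cases c with
  | nil => simp at hlen
  | cons h p =>
    rename_i v₁
    cases p with
    | nil => simp at hlen
    | cons h₂ p₂ =>
      rename_i v₂
      -- h : G.Adj v v₁, h₂ : G.Adj v₁ v₂, p₂ : G.Walk v₂ v
      have hnodup := hcyc.2
      rw [SimpleGraph.Walk.support_cons, SimpleGraph.Walk.support_cons, List.tail_cons,
        List.nodup_cons] at hnodup
      have hb_not : v₁ ∉ p₂.support := hnodup.1
      have hp₂nodup : p₂.support.Nodup := hnodup.2
      have hac : v₂ ≠ v := by
        intro heq
        subst heq
        cases p₂ with
        | nil => simp [SimpleGraph.Walk.length_cons] at hlen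
        | cons h₃ p₃ =>
          rw [SimpleGraph.Walk.support_cons, List.nodup_cons] at hp₂nodup
          exact hp₂nodup.1 p₃.end_mem_support
      have hvadom : v ∈ adom q.atoms := (adj_mem_adom h).1
      have hv₁adom : v₁ ∈ adom q.atoms := (adj_mem_adom h).2
      obtain ⟨t_ab, htab_a, htab_b⟩ := hedge_bag h
      obtain ⟨t_bc, htbc_b, htbc_c⟩ := hedge_bag h₂
      obtain ⟨W₀, hW₀⟩ := hsubtree v₁ hv₁adom t_ab t_bc htab_b htbc_b
      have sweep : ∀ (r s : td.node) (W : T.Walk r s), W.IsPath →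
          (∀ n ∈ W.support, v₁ ∈ td.bag n) → v ∈ td.bag r → v₂ ∈ td.bag s → False := by
        intro r s W
        induction W with
        | nil =>
          rename_i r'
          intro _ hsup hvr hv₂s
          rcases hbag2 r' v₂ v v₁ hv₂s hvr (hsup r' (by simp)) h.ne with h' | h'
          · exact hac h'
          · exact h₂.ne' h'
        | @cons r r₁ s' hadj W' ih =>
          intro hpath hsup hvr hv₂s
          have hW'path : W'.IsPath := hpath.of_cons
          have hrW' : r ∉ W'.support := ((SimpleGraph.Walk.cons_isPath_iff _ _).mp hpath).2
          have hv₁r : v₁ ∈ td.bag r := hsup r (SimpleGraph.Walk.start_mem_support _)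
          have hv₁r₁ : v₁ ∈ td.bag r₁ := hsup r₁ (by
            rw [SimpleGraph.Walk.support_cons]
            exact List.mem_cons_of_mem _ (SimpleGraph.Walk.start_mem_support _))
          -- sides of the tree edge (r, r₁)
          have htbcB : s' ∈ reachAvoid T r r₁ :=
            walk_reachAvoid (mem_reachAvoid_self r r₁) hadj.ne' W' hrW'
          -- crossing: a vertex of a bag on a B-node, walking to v, yields
          -- a vertex in both bags of the cut
          have hcross : ∀ (y : q.Var), y ∈ adom q.atoms → y ≠ v₁ →
              (∃ n, n ∈ reachAvoid T r r₁ ∧ y ∈ td.bag n) →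
              (∃ n', n' ∈ reachAvoid T r₁ r ∧ y ∈ td.bag n') →
              ∃ zc, zc ∈ td.bag r ∧ zc ∈ td.bag r₁ ∧ zc ≠ v₁ := by
            rintro y hyadom hyne ⟨n, hnB, hyn⟩ ⟨n', hn'A, hyn'⟩
            obtain ⟨wy, hwy⟩ := hsubtree y hyadom n' n hyn' hyn
            have hsep := reachAvoid_sep hTacy hadj hn'A hnB wy
            exact ⟨y, hwy r hsep.1, hwy r₁ hsep.2, hyne⟩
          have chain : ∀ (z zv : q.Var) (pw : G.Walk z zv), v₁ ∉ pw.support →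
              zv ∈ adom q.atoms → zv ≠ v₁ → zv ∈ td.bag r →
              (∃ n, n ∈ reachAvoid T r r₁ ∧ z ∈ td.bag n) →
              ∃ zc, zc ∈ td.bag r ∧ zc ∈ td.bag r₁ ∧ zc ≠ v₁ := by
            intro z zv pw
            induction pw with
            | nil =>
              rename_i z'
              intro hnb hzva hzvne hzvr hex
              exact hcross z' hzva hzvne hex ⟨r, mem_reachAvoid_self r₁ r, hzvr⟩
            | @cons z z₁ z₂ hadjz pw' ih2 =>
              intro hnb hzva hzvne hzvr hex
              have hz₁v₁ : v₁ ∉ pw'.support := by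
                rw [SimpleGraph.Walk.support_cons] at hnb
                exact fun hc => hnb (List.mem_cons_of_mem _ hc)
              have hzne : z ≠ v₁ := by
                rw [SimpleGraph.Walk.support_cons] at hnb
                exact fun hc => hnb (hc ▸ List.mem_cons_self)
              obtain ⟨t_e, hte_z, hte_z₁⟩ := hedge_bag hadjz
              obtain ⟨wT⟩ := td.isTree.1.preconnected r t_e
              rcases reachAvoid_cover hadj.ne (Or.inl (mem_reachAvoid_self r₁ r)) wT
                with hA | hB
              · exact hcross z ((adj_mem_adom hadjz).1) hzne hex ⟨t_e, hA, hte_z⟩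
              · exact ih2 hz₁v₁ hzva hzvne hzvr ⟨t_e, hB, hte_z₁⟩
          obtain ⟨zc, hzcr, hzcr₁, hzcne⟩ := chain v₂ v p₂ hb_not hvadom h.ne hvr ⟨s', htbcB, hv₂s⟩
          rcases hbag2 r zc v v₁ hzcr hvr hv₁r h.ne with h' | h'
          · refine ih hW'path (fun n hn => hsup n ?_) (h' ▸ hzcr₁) hv₂s
            rw [SimpleGraph.Walk.support_cons]
            exact List.mem_cons_of_mem _ hn
          · exact hzcne h'
      exact sweep t_ab t_bc W₀.bypass W₀.bypass_isPath
        (fun n hn => hW₀ n (W₀.support_bypass_subset hn)) htab_a htbc_c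

end Acyclicity

section FixedPoint

variable {σ : Schema} {q : CQ σ 0}

/-- An endomorphism of a connected acyclic core with a fixed point is the
identity on the active domain. -/
lemma endo_fixed_id (hconn : q.IsConnected) (hacy : (gaifmanOf q.atoms).IsAcyclic)
    (hcore : IsCore q) {h : q.Var → q.Var} (hh : IsHom h q.atoms q.atoms)
    {w : q.Var} (hw : w ∈ adom q.atoms) (hfix : h w = w) :
    ∀ x ∈ adom q.atoms, h x = x := by
  classical
  set G := gaifmanOf q.atoms with hG
  intro x hx
  by_contra hmove
  have hinj := endo_injOn hcore hh
  -- find an adjacent fixed/moved pair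
  have hpair : ∃ w' y : q.Var, G.Adj w' y ∧ h w' = w' ∧ h y ≠ y := by
    have hfind : ∀ (a b : q.Var) (p : G.Walk a b), h a = a → h b ≠ b →
        ∃ w' y : q.Var, G.Adj w' y ∧ h w' = w' ∧ h y ≠ y := by
      intro a b p
      induction p with
      | nil => intro h1 h2; exact absurd h1 h2
      | @cons a a₁ b hadj p' ih =>
        intro h1 h2
        by_cases hc : h a₁ = a₁
        · exact ih hc h2
        · exact ⟨a, a₁, hadj, h1, hc⟩
    obtain ⟨p⟩ := hconn.preconnected ⟨w, hw⟩ ⟨x, hx⟩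
    exact hfind w x (p.map (SimpleGraph.Embedding.induce _).toHom) hfix hmove
  obtain ⟨w', y, hadj, hfix', hmove'⟩ := hpair
  have hyne : y ≠ w' := hadj.ne'
  have hw'adom : w' ∈ adom q.atoms := (adj_mem_adom hadj).1
  have hyadom : y ∈ adom q.atoms := (adj_mem_adom hadj).2
  set C := reachAvoid G w' y with hC
  have hCne : ∀ z ∈ C, z ≠ w' := fun z hz => reachAvoid_ne hyne hz
  have hCadom : ∀ z ∈ C, z ∈ adom q.atoms := by
    intro z hz
    induction hz with
    | refl => exact hyadom
    | tail _ hstep ih => exact (adj_mem_adom hstep.1).2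
  have hinj_ne : ∀ z ∈ adom q.atoms, z ≠ w' → h z ≠ w' := by
    intro z hz hzne hc
    exact hzne (hinj hz hw'adom (hc.trans hfix'.symm))
  -- image of C under h
  have hCmap : ∀ z ∈ C, h z ∈ reachAvoid G w' (h y) := by
    intro z hz
    induction hz with
    | refl => exact mem_reachAvoid_self _ _
    | tail _ hstep ih =>
      exact Relation.ReflTransGen.tail ih
        ⟨endo_adj hcore hh hstep.1,
         hinj_ne _ (adj_mem_adom hstep.1).1 hstep.2.1,
         hinj_ne _ (adj_mem_adom hstep.1).2 hstep.2.2⟩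
  have hhyne : h y ≠ w' := hinj_ne y hyadom hyne
  -- h y is not in C
  have hhyC : h y ∉ C := by
    intro hcmem
    obtain ⟨wk, hwk⟩ := reachAvoid_walk hyne hcmem
    have hQpath : (SimpleGraph.Walk.cons hadj.symm
        (SimpleGraph.Walk.cons (hfix' ▸ endo_adj hcore hh hadj)
          (SimpleGraph.Walk.nil : G.Walk (h y) (h y)))).IsPath := by
      rw [SimpleGraph.Walk.isPath_def]
      simp [SimpleGraph.Walk.support_cons]
      refine ⟨⟨hyne, fun hc => hmove' hc.symm⟩, hhyne.symm⟩
    have := SimpleGraph.isAcyclic_iff_path_unique.mp hacy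
      ⟨wk.bypass, wk.bypass_isPath⟩ ⟨_, hQpath⟩
    have heq : wk.bypass = (SimpleGraph.Walk.cons hadj.symm
        (SimpleGraph.Walk.cons (hfix' ▸ endo_adj hcore hh hadj)
          (SimpleGraph.Walk.nil : G.Walk (h y) (h y)))) := congrArg Subtype.val this
    have hw'mem : w' ∈ wk.bypass.support := by
      rw [heq]
      simp [SimpleGraph.Walk.support_cons]
    exact hwk (wk.support_bypass_subset hw'mem)
  -- C and h '' C are disjoint
  have hdisj : ∀ z ∈ C, h z ∉ C := by
    intro z hz hcz
    have h1 : h z ∈ reachAvoid G w' (h y) := hCmap z hz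
    have h2 : h y ∈ reachAvoid G w' (h z) := reachAvoid_symm hhyne h1
    exact hhyC (reachAvoid_trans hcz h2)
  -- the folding map
  set g : q.Var → q.Var := fun z => if z ∈ C then h z else z with hg
  have hgw' : g w' = w' := by
    rw [hg]; simp only [if_neg (fun hc => hCne w' hc rfl)]
  have hghom : IsHom g q.atoms q.atoms := by
    intro f hf
    by_cases hc : ∃ i, f.args i ∈ C
    · obtain ⟨i₀, hi₀⟩ := hc
      have hall : ∀ j, f.args j ∈ C ∨ f.args j = w' := by
        intro j
        by_cases hjw : f.args j = w'
        · exact Or.inr hjw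
        by_cases hji : f.args j = f.args i₀
        · exact Or.inl (hji ▸ hi₀)
        · exact Or.inl (reachAvoid_step hi₀
            ⟨fun hc => hji hc.symm, f, hf, ⟨i₀, rfl⟩, ⟨j, rfl⟩⟩ hyne hjw)
      have : f.map g = f.map h := by
        show Atom.mk f.rel _ = Atom.mk f.rel _
        refine congrArg (Atom.mk f.rel) (funext fun j => ?_)
        rcases hall j with hj | hj
        · show g (f.args j) = h (f.args j)
          rw [hg]; simp only [if_pos hj]
        · show g (f.args j) = h (f.args j)
          rw [hj, hgw', hfix']
      rw [this]
      exact hh f hf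
    · push_neg at hc
      have : f.map g = f := Atom.map_eq_self (fun i => by
        rw [hg]; simp only [if_neg (hc i)])
      rw [this]; exact hf
  -- contradiction: y is not in the image
  have himg := core_image_atoms hcore hghom
  obtain ⟨fy, hfy, iy, hiy⟩ := mem_adom_iff.mp hyadom
  rw [← himg] at hfy
  obtain ⟨f, hf, rfl⟩ := hfy
  have : g (f.args iy) = y := hiy
  by_cases hcm : f.args iy ∈ C
  · rw [hg] at this
    simp only [if_pos hcm] at this
    exact hdisj _ hcm (this.symm ▸ (mem_reachAvoid_self w' y : y ∈ C))
  · rw [hg] at this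
    simp only [if_neg hcm] at this
    exact hcm (this ▸ (mem_reachAvoid_self w' y : y ∈ C))

end FixedPoint

section OrbitCount

lemma iter_mem_orbit {α : Type} [DecidableEq α] {f : α → α} {x : α} {t : ℕ} (ht : 0 < t)
    (hper : f^[t] x = x) : ∀ m, f^[m] x ∈ (Finset.range t).image (fun j => f^[j] x) := by
  intro m
  induction m using Nat.strong_induction_on with
  | _ m ih =>
    by_cases hm : m < t
    · exact Finset.mem_image.mpr ⟨m, Finset.mem_range.mpr hm, rfl⟩
    · have hmt : m - t < m := by omega
      have : f^[m] x = f^[m - t] x := by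
        conv_lhs => rw [show m = (m - t) + t by omega]
        rw [Function.iterate_add_apply, hper]
      rw [this]
      exact ih _ hmt

lemma orbit_count {α : Type} (k d : ℕ) (hk : 1 ≤ k) (hd : d ∣ k) (f : α → α) :
    ∀ s : Finset α, (∀ x ∈ s, f x ∈ s) → (∀ x ∈ s, f^[k] x = x) →
    (∀ x ∈ s, ∀ j, 0 < j → j < k → f^[j] x = x → d ∣ j) → d ∣ s.card := by
  classical
  intro s
  induction s using Finset.strongInductionOn with
  | _ s ih =>
    intro hmaps hper hfree
    rcases Finset.eq_empty_or_nonempty s with rfl | ⟨x, hx⟩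
    · simp
    have hex : ∃ j, 0 < j ∧ f^[j] x = x := ⟨k, hk, hper x hx⟩
    set t := Nat.find hex with hts
    obtain ⟨htpos, htper⟩ : 0 < t ∧ f^[t] x = x := Nat.find_spec hex
    have htle : t ≤ k := Nat.find_le ⟨hk, hper x hx⟩
    have hdt : d ∣ t := by
      rcases lt_or_eq_of_le htle with hlt | heq
      · exact hfree x hx t htpos hlt htper
      · exact heq ▸ hd
    set O := (Finset.range t).image (fun j => f^[j] x) with hO
    have hiter_mem : ∀ m, f^[m] x ∈ O := iter_mem_orbit htpos htper
    have hOsub : O ⊆ s := by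
      intro a ha
      obtain ⟨j, -, rfl⟩ := Finset.mem_image.mp ha
      clear ha
      show f^[j] x ∈ s
      induction j with
      | zero => exact hx
      | succ n ihn => rw [Function.iterate_succ_apply']; exact hmaps _ ihn
    have key : ∀ i j : ℕ, i < j → j < t → f^[i] x = f^[j] x → False := by
      intro i j hlt hjt hij
      have hthis : f^[t - j + i] x = x := by
        rw [Function.iterate_add_apply, hij, ← Function.iterate_add_apply]
        rw [show t - j + j = t by omega]
        exact htper
      exact Nat.find_min hex (m := t - j + i) (by omega) ⟨by omega, hthis⟩
    have hinj : Set.InjOn (fun j => f^[j] x) (Finset.range t) := by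
      intro i hi j hj hij
      simp only [Finset.coe_range, Set.mem_Iio] at hi hj
      have hij' : f^[i] x = f^[j] x := hij
      rcases lt_trichotomy i j with hc | hc | hc
      · exact absurd hij' (fun hcc => key i j hc hj hcc)
      · exact hc
      · exact absurd hij'.symm (fun hcc => key j i hc hi hcc)
    have hOcard : O.card = t := by
      rw [hO, Finset.card_image_of_injOn hinj, Finset.card_range]
    have hOclosed : ∀ a ∈ O, f a ∈ O := by
      intro a ha
      obtain ⟨j, -, rfl⟩ := Finset.mem_image.mp ha
      show f (f^[j] x) ∈ O
      have := hiter_mem (j + 1)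
      rwa [Function.iterate_succ_apply'] at this
    have hOclosed_iter : ∀ a ∈ O, ∀ m, f^[m] a ∈ O := by
      intro a ha m
      induction m with
      | zero => exact ha
      | succ n ihn => rw [Function.iterate_succ_apply']; exact hOclosed _ ihn
    have hs'maps : ∀ y ∈ s \ O, f y ∈ s \ O := by
      intro y hy
      rw [Finset.mem_sdiff] at hy ⊢
      refine ⟨hmaps y hy.1, fun hc => hy.2 ?_⟩
      have h1 : f^[k - 1] (f y) ∈ O := hOclosed_iter _ hc _
      have h2 : f^[k] y ∈ O := by
        rw [show k = (k - 1) + 1 by omega, Function.iterate_succ_apply]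
        exact h1
      rwa [hper y hy.1] at h2
    have hssub : s \ O ⊂ s := by
      refine Finset.sdiff_ssubset ?_ ?_
      · exact hOsub
      · exact ⟨x, hiter_mem 0⟩
    have hrec := ih (s \ O) hssub hs'maps
      (fun y hy => hper y (Finset.mem_sdiff.mp hy).1)
      (fun y hy => hfree y (Finset.mem_sdiff.mp hy).1)
    have hcard : s.card = (s \ O).card + t := by
      rw [Finset.card_sdiff_of_subset hOsub, hOcard]
      have := Finset.card_le_card hOsub
      omega
    rw [hcard]
    exact Nat.dvd_add hrec hdt

end OrbitCount

section MainStructure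

variable {σ : Schema} {q : CQ σ 0}

lemma mapsTo_iterate {h : q.Var → q.Var} (hh : IsHom h q.atoms q.atoms) (n : ℕ) :
    Set.MapsTo h^[n] (adom q.atoms) (adom q.atoms) := by
  induction n with
  | zero => simpa using Set.mapsTo_id _
  | succ n ih =>
    rw [Function.iterate_succ']
    exact (endo_mapsTo hh).comp ih

lemma injOn_iterate (hcore : IsCore q) {h : q.Var → q.Var}
    (hh : IsHom h q.atoms q.atoms) (n : ℕ) :
    Set.InjOn h^[n] (adom q.atoms) := by
  induction n with
  | zero => simpa using Set.injOn_id _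
  | succ n ih =>
    rw [Function.iterate_succ']
    exact ((endo_injOn hcore hh).comp ih (mapsTo_iterate hh n))

lemma sym2_map_iterate {α : Type} (h : α → α) (n : ℕ) (a b : α) :
    (Sym2.map h)^[n] s(a, b) = s(h^[n] a, h^[n] b) := by
  induction n with
  | zero => simp
  | succ n ih => rw [Function.iterate_succ_apply', ih, Sym2.map_pair_eq,
      Function.iterate_succ_apply', Function.iterate_succ_apply']

/-- Main structural lemma: a nontrivial endomorphism of a connected acyclic
binary core is an involution on the active domain and swaps some edge. -/
lemma endo_swap (harity : ∀ R : σ.Rel, σ.arity R ≤ 2) (hconn : q.IsConnected)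
    (hghw : q.ghwLE 1) (hcore : IsCore q) {h : q.Var → q.Var}
    (hh : IsHom h q.atoms q.atoms) (hmove : ∃ x ∈ adom q.atoms, h x ≠ x) :
    (∀ x ∈ adom q.atoms, h (h x) = x) ∧
    ∃ u v : q.Var, (gaifmanOf q.atoms).Adj u v ∧ h u = v ∧ h v = u := by
  classical
  set G := gaifmanOf q.atoms with hG
  have hacy : G.IsAcyclic := gaifman_acyclic harity hghw
  have hAfin : (adom q.atoms).Finite := adom_finite q.finAtoms
  have hinj := endo_injOn hcore hh
  -- a fixed point forces identity
  have hfixid : ∀ (g : q.Var → q.Var), IsHom g q.atoms q.atoms →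
      (∃ w ∈ adom q.atoms, g w = w) → ∀ x ∈ adom q.atoms, g x = x := by
    rintro g hg ⟨w, hw, hwfix⟩
    exact endo_fixed_id hconn hacy hcore hg hw hwfix
  -- existence of a positive period
  have hperiod : ∃ n, 0 < n ∧ ∀ x ∈ adom q.atoms, h^[n] x = x := by
    haveI : Finite ↥(adom q.atoms) := hAfin
    obtain ⟨i, j, hne, hij⟩ := Finite.exists_ne_map_eq_of_infinite (fun n : ℕ =>
        (fun z : ↥(adom q.atoms) => (⟨h^[n] z.1, mapsTo_iterate hh n z.2⟩ :
          ↥(adom q.atoms))))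
    wlog hlt : j < i generalizing i j
    · exact this j i (Ne.symm hne) hij.symm (by omega)
    refine ⟨i - j, by omega, fun x hx => ?_⟩
    have hx' : h^[i] x = h^[j] x := by
      have := congrFun hij ⟨x, hx⟩
      simpa using congrArg Subtype.val this
    have : h^[j] (h^[i - j] x) = h^[j] x := by
      rw [← Function.iterate_add_apply, show j + (i - j) = i by omega]
      exact hx'
    exact injOn_iterate hcore hh j (mapsTo_iterate hh (i - j) hx) hx this
  -- minimal period k
  set k := Nat.find hperiod with hk
  obtain ⟨hkpos, hkper⟩ : 0 < k ∧ ∀ x ∈ adom q.atoms, h^[k] x = x :=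
    Nat.find_spec hperiod
  have hkne1 : k ≠ 1 := by
    intro h1
    obtain ⟨x, hx, hxm⟩ := hmove
    have := hkper x hx
    rw [h1] at this
    exact hxm (by simpa using this)
  -- no smaller positive period, and freeness of all intermediate powers
  have hfree : ∀ j, 0 < j → j < k → ∀ x ∈ adom q.atoms, h^[j] x ≠ x := by
    intro j hj hjk x hx hfix
    have hid := hfixid h^[j] (isHom_iterate hh j) ⟨x, hx, hfix⟩
    exact Nat.find_min hperiod hjk ⟨hj, hid⟩
  have hmindvd : ∀ p, (∀ x ∈ adom q.atoms, h^[p] x = x) → k ∣ p := by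
    intro p hp
    have hmul : ∀ m, ∀ x ∈ adom q.atoms, h^[k * m] x = x := by
      intro m
      induction m with
      | zero => simp
      | succ m ihm =>
        intro x hx
        rw [show k * (m + 1) = k * m + k by ring, Function.iterate_add_apply]
        rw [hkper x hx]
        exact ihm x hx
    have hr : ∀ x ∈ adom q.atoms, h^[p % k] x = x := by
      intro x hx
      have hthis := hp x hx
      rw [show p = k * (p / k) + p % k from (Nat.div_add_mod p k).symm,
        Function.iterate_add_apply] at hthis
      rwa [hmul (p / k) (h^[p % k] x) (mapsTo_iterate hh (p % k) hx)] at hthis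
    by_contra hnd
    have hrk : p % k < k := Nat.mod_lt _ hkpos
    have hrpos : 0 < p % k := by
      rcases Nat.eq_zero_or_pos (p % k) with h0 | h0
      · exact absurd (Nat.dvd_of_mod_eq_zero h0) hnd
      · exact h0
    exact hfree _ hrpos hrk _ (hmove.choose_spec.1) (hr _ hmove.choose_spec.1)
  -- counting: |E| + 1 = |V|
  have hEfin : G.edgeSet.Finite := by
    refine Set.Finite.subset (t := G.edgeSet) (Set.Finite.image (α := q.Var × q.Var) (β := Sym2 q.Var) (fun p => s(p.1, p.2))
      (Set.Finite.prod hAfin hAfin)) ?_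
    intro e he
    induction e with
    | _ a b =>
      rw [SimpleGraph.mem_edgeSet] at he
      exact ⟨(a, b), ⟨(adj_mem_adom he).1, (adj_mem_adom he).2⟩, rfl⟩
  set sV := hAfin.toFinset with hsV
  set sE := hEfin.toFinset with hsE
  have hcount : sE.card + 1 = sV.card := by
    haveI : Fintype ↥(adom q.atoms) := hAfin.fintype
    set G' := SimpleGraph.induce (adom q.atoms) G with hG'
    have hG'acy : G'.IsAcyclic := by
      intro v c hc
      have hinjv : Function.Injective (SimpleGraph.Embedding.induce
          (adom q.atoms) (G := G)).toHom := Subtype.val_injective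
      exact hacy _ ((SimpleGraph.Walk.map_isCycle_iff_of_injective hinjv).mpr hc)
    have hG'tree : G'.IsTree := ⟨hconn, hG'acy⟩
    haveI : Fintype ↥G'.edgeSet := Fintype.ofFinite _
    have htree := hG'tree.card_edgeFinset
    have himg : G.edgeSet = Sym2.map Subtype.val '' G'.edgeSet := by
      ext e
      induction e with
      | _ a b =>
        constructor
        · intro he
          rw [SimpleGraph.mem_edgeSet] at he
          refine ⟨s(⟨a, (adj_mem_adom he).1⟩, ⟨b, (adj_mem_adom he).2⟩), ?_, rfl⟩
          exact he
        · rintro ⟨e', he', hmap⟩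
          induction e' with
          | _ a' b' =>
            rw [Sym2.map_pair_eq, Sym2.eq_iff] at hmap
            have hadj' : G.Adj a'.1 b'.1 := he'
            rcases hmap with ⟨rfl, rfl⟩ | ⟨rfl, rfl⟩
            · exact hadj'
            · exact hadj'.symm
    have hcard1 : sE.card = G'.edgeFinset.card := by
      rw [hsE, ← Set.ncard_eq_toFinset_card _ hEfin, himg,
        Set.ncard_image_of_injective _ (Sym2.map.injective Subtype.val_injective),
        Set.ncard_eq_toFinset_card' , SimpleGraph.edgeFinset]
    have hcard2 : sV.card = Fintype.card ↥(adom q.atoms) := by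
      rw [hsV, ← Set.ncard_eq_toFinset_card _ hAfin, ← Nat.card_coe_set_eq,
        Nat.card_eq_fintype_card]
    rw [hcard1, hcard2]
    exact htree
  -- vertex orbits
  have hVmem : ∀ x, x ∈ sV ↔ x ∈ adom q.atoms := fun x => hAfin.mem_toFinset
  have hEmem : ∀ e, e ∈ sE ↔ e ∈ G.edgeSet := fun e => hEfin.mem_toFinset
  have hVdvd : k ∣ sV.card := by
    refine orbit_count k k (by omega) dvd_rfl h sV ?_ ?_ ?_
    · intro x hx; exact (hVmem _).mpr (endo_mapsTo hh ((hVmem _).mp hx))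
    · intro x hx; exact hkper x ((hVmem _).mp hx)
    · intro x hx j hj hjk hfix
      exact absurd hfix (hfree j hj hjk x ((hVmem _).mp hx))
  -- edge orbit facts
  have hEmaps : ∀ e ∈ sE, Sym2.map h e ∈ sE := by
    intro e he
    rw [hEmem] at he ⊢
    induction e with
    | _ a b =>
      rw [SimpleGraph.mem_edgeSet] at he
      rw [Sym2.map_pair_eq, SimpleGraph.mem_edgeSet]
      exact endo_adj hcore hh he
  have hEper : ∀ e ∈ sE, (Sym2.map h)^[k] e = e := by
    intro e he
    rw [hEmem] at he
    induction e with
    | _ a b =>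
      rw [SimpleGraph.mem_edgeSet] at he
      rw [sym2_map_iterate, hkper a (adj_mem_adom he).1, hkper b (adj_mem_adom he).2]
  have hEfix : ∀ e ∈ sE, ∀ j, 0 < j → j < k → (Sym2.map h)^[j] e = e →
      (2 * j = k ∧ ∃ u v : q.Var, G.Adj u v ∧ h^[j] u = v ∧ h^[j] v = u) := by
    intro e he j hj hjk hfix
    rw [hEmem] at he
    induction e with
    | _ a b =>
      rw [SimpleGraph.mem_edgeSet] at he
      rw [sym2_map_iterate, Sym2.eq_iff] at hfix
      rcases hfix with ⟨ha, hb⟩ | ⟨ha, hb⟩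
      · exact absurd ha (hfree j hj hjk a (adj_mem_adom he).1)
      · have h2j : ∀ x ∈ adom q.atoms, h^[2 * j] x = x := by
          have : h^[j] (h^[j] a) = a := by rw [ha, hb]
          refine hfixid h^[2 * j] (isHom_iterate hh (2 * j)) ⟨a, (adj_mem_adom he).1, ?_⟩
          rw [show 2 * j = j + j by ring, Function.iterate_add_apply, this]
        have hdvd := hmindvd (2 * j) h2j
        have h2jk : 2 * j = k := by
          obtain ⟨c, hc⟩ := hdvd
          rcases c with _ | _ | c
          · simp at hc; omega
          · simpa using hc
          · exfalso
            have h1 : k * c + 2 * k = 2 * j := by rw [hc]; ring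
            have h2 : 2 * k ≤ 2 * j := h1 ▸ Nat.le_add_left _ _
            omega
        exact ⟨h2jk, a, b, he, ha, hb⟩
  -- k must equal 2
  have hk2 : k = 2 := by
    by_contra hne2
    have hk3 : 3 ≤ k := by omega
    set d := if 2 ∣ k then k / 2 else k with hd
    have hddvd : d ∣ k := by
      rw [hd]
      split
      · exact Nat.div_dvd_of_dvd ‹2 ∣ k›
      · exact dvd_rfl
    have hEdvd : d ∣ sE.card := by
      refine orbit_count k d (by omega) hddvd (Sym2.map h) sE hEmaps hEper ?_
      intro e he j hj hjk hfix
      obtain ⟨h2j, -⟩ := hEfix e he j hj hjk hfix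
      have h2k : 2 ∣ k := ⟨j, by omega⟩
      rw [hd, if_pos h2k]
      exact ⟨1, by omega⟩
    have hdV : d ∣ sV.card := hddvd.trans hVdvd
    have hd2 : 2 ≤ d := by
      rw [hd]
      split
      · rename_i h2k
        obtain ⟨c, hc⟩ := h2k
        omega
      · omega
    have hd1 : d ∣ 1 := by
      have := Nat.dvd_sub hdV hEdvd
      rwa [show sV.card - sE.card = 1 by omega] at this
    exact absurd (Nat.le_of_dvd one_pos hd1) (by omega)
  -- with k = 2, there must be a swapped edge
  have hswap : ∃ u v : q.Var, G.Adj u v ∧ h u = v ∧ h v = u := by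
    by_contra hno
    push_neg at hno
    have hEdvd : 2 ∣ sE.card := by
      refine orbit_count k 2 (by omega) (by omega) (Sym2.map h) sE hEmaps hEper ?_
      intro e he j hj hjk hfix
      exfalso
      obtain ⟨-, u, v, huv, hu, hv⟩ := hEfix e he j hj hjk hfix
      have hj1 : j = 1 := by omega
      subst hj1
      rw [Function.iterate_one] at hu hv
      exact hno u v huv hu hv
    have hVdvd2 : 2 ∣ sV.card := hk2 ▸ hVdvd
    have hd1 : (2 : ℕ) ∣ 1 := by
      have := Nat.dvd_sub hVdvd2 hEdvd
      rwa [show sV.card - sE.card = 1 by omega] at this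
    omega
  refine ⟨?_, hswap⟩
  intro x hx
  have h2per := hkper x hx
  rw [hk2] at h2per
  exact h2per

end MainStructure

section EdgeUnique

variable {σ : Schema} {q : CQ σ 0}

lemma side_subset_adom {a b z : q.Var} (hadj : (gaifmanOf q.atoms).Adj a b)
    (hz : z ∈ reachAvoid (gaifmanOf q.atoms) b a) : z ∈ adom q.atoms := by
  induction hz with
  | refl => exact (adj_mem_adom hadj).1
  | tail _ hstep ih => exact (adj_mem_adom hstep.1).2

lemma side_mapsTo (hcore : IsCore q) {g : q.Var → q.Var}
    (hg : IsHom g q.atoms q.atoms) {a b : q.Var} (hadj : (gaifmanOf q.atoms).Adj a b)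
    (hga : g a = b) (hgb : g b = a) :
    ∀ z ∈ reachAvoid (gaifmanOf q.atoms) b a, g z ∈ reachAvoid (gaifmanOf q.atoms) a b := by
  intro z hz
  have hinj := endo_injOn hcore hg
  induction hz with
  | refl => rw [hga]; exact mem_reachAvoid_self a b
  | tail _ hstep ih =>
    rename_i c d hcd
    have hcadom : c ∈ adom q.atoms := (adj_mem_adom hstep.1).1
    have hdadom : d ∈ adom q.atoms := (adj_mem_adom hstep.1).2
    refine Relation.ReflTransGen.tail ih ⟨endo_adj hcore hg hstep.1, ?_, ?_⟩
    · intro hc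
      exact hstep.2.1 (hinj hcadom (adj_mem_adom hadj).2 (hc.trans hgb.symm))
    · intro hc
      exact hstep.2.2 (hinj hdadom (adj_mem_adom hadj).2 (hc.trans hgb.symm))

lemma side_ncard_eq (hcore : IsCore q) {g : q.Var → q.Var}
    (hg : IsHom g q.atoms q.atoms) {a b : q.Var} (hadj : (gaifmanOf q.atoms).Adj a b)
    (hga : g a = b) (hgb : g b = a) :
    (reachAvoid (gaifmanOf q.atoms) b a).ncard = (reachAvoid (gaifmanOf q.atoms) a b).ncard := by
  have hAfin : (adom q.atoms).Finite := adom_finite q.finAtoms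
  have hfinA : (reachAvoid (gaifmanOf q.atoms) b a).Finite :=
    hAfin.subset (fun z hz => side_subset_adom hadj hz)
  have hfinB : (reachAvoid (gaifmanOf q.atoms) a b).Finite :=
    hAfin.subset (fun z hz => side_subset_adom hadj.symm hz)
  have hinj := endo_injOn hcore hg
  have h1 : (reachAvoid (gaifmanOf q.atoms) b a).ncard ≤
      (reachAvoid (gaifmanOf q.atoms) a b).ncard := by
    rw [← Set.ncard_image_of_injOn (hinj.mono (fun z hz => side_subset_adom hadj hz))]
    exact Set.ncard_le_ncard (fun y ⟨z, hz, hyz⟩ => hyz ▸ side_mapsTo hcore hg hadj hga hgb z hz) hfinB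
  have h2 : (reachAvoid (gaifmanOf q.atoms) a b).ncard ≤
      (reachAvoid (gaifmanOf q.atoms) b a).ncard := by
    rw [← Set.ncard_image_of_injOn (hinj.mono (fun z hz => side_subset_adom hadj.symm hz))]
    exact Set.ncard_le_ncard
      (fun y ⟨z, hz, hyz⟩ => hyz ▸ side_mapsTo hcore hg hadj.symm hgb hga z hz) hfinA
  omega

lemma side_union (hconn : q.IsConnected) {a b z : q.Var}
    (hadj : (gaifmanOf q.atoms).Adj a b) (hz : z ∈ adom q.atoms) :
    z ∈ reachAvoid (gaifmanOf q.atoms) b a ∪ reachAvoid (gaifmanOf q.atoms) a b := by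
  obtain ⟨p⟩ := hconn.preconnected ⟨a, (adj_mem_adom hadj).1⟩ ⟨z, hz⟩
  exact reachAvoid_cover hadj.ne (Or.inl (mem_reachAvoid_self b a))
    (p.map (SimpleGraph.Embedding.induce _).toHom)

lemma cross_edge (hacy : (gaifmanOf q.atoms).IsAcyclic) {a b x y : q.Var}
    (hadj : (gaifmanOf q.atoms).Adj a b)
    (hx : x ∈ reachAvoid (gaifmanOf q.atoms) b a)
    (hy : y ∈ reachAvoid (gaifmanOf q.atoms) a b)
    (hxy : (gaifmanOf q.atoms).Adj x y) : x = a ∧ y = b := by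
  have hyb : y = b := by
    by_contra hc
    exact reachAvoid_disjoint hacy hadj
      (reachAvoid_step hx hxy hadj.ne hc) hy
  have hxa : x = a := by
    by_contra hc
    refine reachAvoid_disjoint hacy hadj hx ?_
    exact reachAvoid_step (mem_reachAvoid_self a b) (hyb ▸ hxy.symm) hadj.ne' hc
  exact ⟨hxa, hyb⟩

lemma swap_edge_eq (hconn : q.IsConnected) (hacy : (gaifmanOf q.atoms).IsAcyclic)
    (hcore : IsCore q) {h1 h2 : q.Var → q.Var}
    (hh1 : IsHom h1 q.atoms q.atoms) (hh2 : IsHom h2 q.atoms q.atoms)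
    {u v u' v' : q.Var} (hadj : (gaifmanOf q.atoms).Adj u v)
    (hadj' : (gaifmanOf q.atoms).Adj u' v')
    (h1u : h1 u = v) (h1v : h1 v = u) (h2u : h2 u' = v') (h2v : h2 v' = u') :
    s(u, v) = s(u', v') := by
  classical
  set G := gaifmanOf q.atoms with hG
  by_contra hne
  have hAfin : (adom q.atoms).Finite := adom_finite q.finAtoms
  have hNcard : ∀ (a b : q.Var), G.Adj a b →
      (reachAvoid G b a).ncard + (reachAvoid G a b).ncard = (adom q.atoms).ncard := by
    intro a b hab
    rw [← Set.ncard_union_eq (Set.disjoint_left.mpr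
        (fun z hz hz' => reachAvoid_disjoint hacy hab hz hz'))
      (hAfin.subset (fun z hz => side_subset_adom hab hz))
      (hAfin.subset (fun z hz => side_subset_adom hab.symm hz))]
    congr 1
    apply Set.Subset.antisymm
    · rintro z (hz | hz)
      · exact side_subset_adom hab hz
      · exact side_subset_adom hab.symm hz
    · exact fun z hz => side_union hconn hab hz
  -- main argument, for u', v' on the `a`-side of the edge (a, b)
  have main : ∀ (a b : q.Var) (hab : G.Adj a b), h1 a = b → h1 b = a →
      u' ∈ reachAvoid G b a → v' ∈ reachAvoid G b a → False := by
    intro a b hab h1a h1b hu'A hv'A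
    -- find the side P of (u', v') containing both b and a
    have hbB : b ∈ reachAvoid G a b := mem_reachAvoid_self a b
    have hbne' : b ≠ u' ∧ b ≠ v' := by
      constructor
      · intro hc
        exact reachAvoid_disjoint hacy hab (hc ▸ hu'A) hbB
      · intro hc
        exact reachAvoid_disjoint hacy hab (hc ▸ hv'A) hbB
    obtain ⟨sb, w, hsw, hbP, haP⟩ : ∃ sb w : q.Var,
        ((sb = u' ∧ w = v') ∨ (sb = v' ∧ w = u')) ∧
        b ∈ reachAvoid G w sb ∧ a ∈ reachAvoid G w sb := by
      by_cases hau' : a = u'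
      · refine ⟨u', v', Or.inl ⟨rfl, rfl⟩, ?_, by rw [hau']; exact mem_reachAvoid_self v' u'⟩
        exact reachAvoid_step (mem_reachAvoid_self v' u') (hau' ▸ hab) hadj'.ne hbne'.2
      by_cases hav' : a = v'
      · refine ⟨v', u', Or.inr ⟨rfl, rfl⟩, ?_, by rw [hav']; exact mem_reachAvoid_self u' v'⟩
        exact reachAvoid_step (mem_reachAvoid_self u' v') (hav' ▸ hab) hadj'.ne' hbne'.1
      · have hbadom : b ∈ adom q.atoms := (adj_mem_adom hab).2
        rcases side_union hconn hadj' hbadom with hP | hP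
        · refine ⟨u', v', Or.inl ⟨rfl, rfl⟩, hP, ?_⟩
          exact reachAvoid_step hP hab.symm hadj'.ne hav'
        · refine ⟨v', u', Or.inr ⟨rfl, rfl⟩, hP, ?_⟩
          exact reachAvoid_step hP hab.symm hadj'.ne' hau'
    -- the B-side of (a,b) is contained in P
    have hBsubP : ∀ z ∈ reachAvoid G a b, z ∈ reachAvoid G w sb := by
      intro z hz
      refine reachAvoid_trans hbP ?_
      have hsbne : sb ≠ w := by
        rcases hsw with ⟨rfl, rfl⟩ | ⟨rfl, rfl⟩
        · exact hadj'.ne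
        · exact hadj'.ne'
      have hzB : z ∈ reachAvoid G a b := hz
      -- walk from b to z within the B-side avoids w (which is on the A-side)
      induction hz with
      | refl => exact mem_reachAvoid_self w b
      | tail hcd hstep ih =>
        rename_i c d
        have hcB : c ∈ reachAvoid G a b := hcd
        have hdB : d ∈ reachAvoid G a b := Relation.ReflTransGen.tail hcd hstep
        have hwA : w ∈ reachAvoid G b a := by
          rcases hsw with ⟨rfl, rfl⟩ | ⟨rfl, rfl⟩
          · exact hv'A
          · exact hu'A
        refine Relation.ReflTransGen.tail (ih hcB) ⟨hstep.1, ?_, ?_⟩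
        · intro hc
          exact reachAvoid_disjoint hacy hab hwA (hc ▸ hcB)
        · intro hc
          exact reachAvoid_disjoint hacy hab hwA (hc ▸ hdB)
    -- cardinalities give a contradiction
    have hPcard : (reachAvoid G w sb).ncard = (reachAvoid G a b).ncard := by
      have e1 := hNcard a b hab
      have e2 := side_ncard_eq hcore hh1 hab h1a h1b
      rw [← hG] at e2
      rcases hsw with ⟨rfl, rfl⟩ | ⟨rfl, rfl⟩
      · have e3 := hNcard sb w hadj'
        have e4 := side_ncard_eq hcore hh2 hadj' h2u h2v
        rw [← hG] at e4
        omega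
      · have e3 := hNcard sb w hadj'.symm
        have e4 := side_ncard_eq hcore hh2 hadj'.symm h2v h2u
        rw [← hG] at e4
        omega
    have hfinP : (reachAvoid G w sb).Finite := by
      rcases hsw with ⟨rfl, rfl⟩ | ⟨rfl, rfl⟩
      · exact hAfin.subset (fun z hz => side_subset_adom hadj' hz)
      · exact hAfin.subset (fun z hz => side_subset_adom hadj'.symm hz)
    have hsubP : insert a (reachAvoid G a b) ⊆ reachAvoid G w sb := by
      intro z hz
      rcases Set.mem_insert_iff.mp hz with rfl | hz
      · exact haP
      · exact hBsubP z hz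
    have hanotB : a ∉ reachAvoid G a b := fun hc =>
      reachAvoid_disjoint hacy hab (mem_reachAvoid_self b a) hc
    have hcard := Set.ncard_le_ncard hsubP hfinP
    rw [Set.ncard_insert_of_notMem hanotB
      (hAfin.subset (fun z hz => side_subset_adom hab.symm hz))] at hcard
    omega
  -- place u' and v' relative to the edge (u, v)
  have hu'adom : u' ∈ adom q.atoms := (adj_mem_adom hadj').1
  have hv'adom : v' ∈ adom q.atoms := (adj_mem_adom hadj').2
  rcases side_union hconn hadj hu'adom with hu'A | hu'B
  · rcases side_union hconn hadj hv'adom with hv'A | hv'B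
    · exact main u v hadj h1u h1v hu'A hv'A
    · obtain ⟨h1', h2'⟩ := cross_edge hacy hadj hu'A hv'B hadj'
      exact hne (by rw [h1', h2'])
  · rcases side_union hconn hadj hv'adom with hv'A | hv'B
    · obtain ⟨h1', h2'⟩ := cross_edge hacy hadj hv'A hu'B hadj'.symm
      exact hne (by rw [h1', h2', Sym2.eq_swap])
    · exact main v u hadj.symm h1v h1u hu'B hv'B

end EdgeUnique

/-- A connected Boolean core in `GHW(1)` over a binary schema has at most one
endomorphism besides the identity; if it exists, it is the swapping
endomorphism for some pair of adjacent variables `u`, `v`. -/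
theorem statement13 (σ : Schema) (harity : ∀ R : σ.Rel, σ.arity R ≤ 2)
    (q : CQ σ 0) (hconn : q.IsConnected) (hghw : q.ghwLE 1) (hcore : IsCore q) :
    (∀ h1 h2 : q.Var → q.Var,
        IsHom h1 q.atoms q.atoms → IsHom h2 q.atoms q.atoms →
        (∃ x ∈ adom q.atoms, h1 x ≠ x) → (∃ x ∈ adom q.atoms, h2 x ≠ x) →
        ∀ x ∈ adom q.atoms, h1 x = h2 x) ∧
    (∀ h : q.Var → q.Var, IsHom h q.atoms q.atoms →
        (∃ x ∈ adom q.atoms, h x ≠ x) →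
        ∃ u v : q.Var, u ∈ adom q.atoms ∧ v ∈ adom q.atoms ∧
          (gaifmanOf q.atoms).Adj u v ∧ h u = v ∧ h v = u) := by
  classical
  have hacy : (gaifmanOf q.atoms).IsAcyclic := gaifman_acyclic harity hghw
  constructor
  · intro h1 h2 hh1 hh2 hm1 hm2 x hx
    obtain ⟨hinv1, u1, v1, hadj1, h1u, h1v⟩ := endo_swap harity hconn hghw hcore hh1 hm1
    obtain ⟨hinv2, u2, v2, hadj2, h2u, h2v⟩ := endo_swap harity hconn hghw hcore hh2 hm2
    have hedge := swap_edge_eq hconn hacy hcore hh1 hh2 hadj1 hadj2 h1u h1v h2u h2v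
    rw [Sym2.eq_iff] at hedge
    have h2swap : h2 u1 = v1 ∧ h2 v1 = u1 := by
      rcases hedge with ⟨rfl, rfl⟩ | ⟨rfl, rfl⟩
      · exact ⟨h2u, h2v⟩
      · exact ⟨h2v, h2u⟩
    have hg : IsHom (h1 ∘ h2) q.atoms q.atoms := isHom_comp hh2 hh1
    have hgfix : (h1 ∘ h2) u1 = u1 := by
      show h1 (h2 u1) = u1
      rw [h2swap.1, h1v]
    have hid := endo_fixed_id hconn hacy hcore hg (adj_mem_adom hadj1).1 hgfix
    have hx2 : h2 x ∈ adom q.atoms := endo_mapsTo hh2 hx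
    calc h1 x = h1 (h2 (h2 x)) := by rw [hinv2 x hx]
    _ = h2 x := hid (h2 x) hx2
  · intro h hh hm
    obtain ⟨hinv, u, v, hadj, hu, hv⟩ := endo_swap harity hconn hghw hcore hh hm
    exact ⟨u, v, (adj_mem_adom hadj).1, (adj_mem_adom hadj).2, hadj, hu, hv⟩
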